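/- Let R be an integral domain. Then R is a D-ring if and only if for every nonconstant polynomial f(x) ∈ R[x] and every nonzero c ∈ R, the set S(f) − S(c) is infinite, where S(f) is the set of nonzero prime ideals 𝔭 of R such that f(k) ∈ 𝔭 for some k ∈ R, and S(c) is the set of nonzero prime ideals of R containing c. -/

import Mathlib

open Polynomial

/-- An integral domain `R` is a *D-ring* if for all polynomials `f, g ∈ R[x]` such that
`g(k) ∣ f(k)` in `R` for all but finitely many `k ∈ R`, there is a polynomial `q` over the
field of fractions of `R` with `f = q * g` in `K[x]`. -/
def IsDRing (R : Type*) [CommRing R] [IsDomain R] : Prop :=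
  ∀ f g : Polynomial R,
    (∀ᶠ k in Filter.cofinite, g.eval k ∣ f.eval k) →
    ∃ q : Polynomial (FractionRing R),
      f.map (algebraMap R (FractionRing R)) = q * g.map (algebraMap R (FractionRing R))

/-- `S f` is the set of nonzero prime ideals `𝔭` of `R` such that `f(k) ∈ 𝔭`
for some `k ∈ R`. -/
def primeSet {R : Type*} [CommRing R] (f : Polynomial R) : Set (Ideal R) :=
  {𝔭 : Ideal R | 𝔭.IsPrime ∧ 𝔭 ≠ ⊥ ∧ ∃ k : R, f.eval k ∈ 𝔭}

/-!
Both conditions are equivalent to `NoBoundedValues R`: a polynomial whose values at almost all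
`k` divide a fixed `c ≠ 0` is constant.

A D-ring has this property because `C c = q * g` in `K[x]` forces `g` to be constant. Conversely,
if `g(k) ∣ f(k)` for almost all `k`, write `f / g = α / Γ` in lowest terms over `K` and clear
denominators in a Bézout identity `Γ U + α V = C e`; then `Γ(k) ∣ e` for almost all `k`, so `Γ`
is constant and `g ∣ f` in `K[x]`.

If the values of a nonconstant `g` almost always divide `c`, a nonzero prime `𝔭` containing `g(k)`
contains `g(k + x)` for every `x ∈ 𝔭`, hence `c`; so `S(g) \ S(c)` is empty. Conversely, if
`S(f) \ S(c)` is finite, some `b ≠ 0` lies in every prime of `S(f)`. With `a = f(τ) ≠ 0` we get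
`f(τ + a b t) = a u` with `u ≡ 1 mod b`; a maximal ideal containing `u` would contain `b`, so `u`
is a unit and the values of the nonconstant polynomial `f(τ + a b X)` divide `a`.
-/

open Filter

section

variable {R : Type*} [CommRing R]

theorem mem_primeSet_C {c : R} {𝔭 : Ideal R} :
    𝔭 ∈ primeSet (C c) ↔ 𝔭.IsPrime ∧ 𝔭 ≠ ⊥ ∧ c ∈ 𝔭 := by
  simp [primeSet]

theorem isUnit_of_dvd_sub_one {u b : R} (hub : b ∣ u - 1)
    (hb : ∀ 𝔪 : Ideal R, 𝔪.IsMaximal → u ∈ 𝔪 → b ∈ 𝔪) : IsUnit u := by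
  by_contra hu
  obtain ⟨𝔪, h𝔪, hu𝔪⟩ := Ideal.exists_le_maximal _ (Ideal.span_singleton_ne_top hu)
  have hu' : u ∈ 𝔪 := hu𝔪 (Ideal.mem_span_singleton_self u)
  have h1 : u - (u - 1) ∈ 𝔪 := 𝔪.sub_mem hu' (𝔪.mem_of_dvd hub (hb 𝔪 h𝔪 hu'))
  exact h𝔪.ne_top ((Ideal.eq_top_iff_one _).mpr (by simpa using h1))

theorem Ideal.infinite_coe_of_ne_bot [IsDomain R] [Infinite R] {I : Ideal R} (hI : I ≠ ⊥) :
    (I : Set R).Infinite := by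
  obtain ⟨a, haI, ha⟩ := Submodule.exists_mem_ne_zero_of_ne_bot hI
  exact Set.infinite_of_injective_forall_mem (mul_right_injective₀ ha) fun r =>
    I.mul_mem_right r haI

theorem eventually_cofinite_eval_ne_zero [IsDomain R] {p : R[X]} (hp : p ≠ 0) :
    ∀ᶠ k in cofinite, p.eval k ≠ 0 :=
  eventually_cofinite.mpr (by simpa using finite_setOfPred_isRoot hp)

theorem primeSet_subset_primeSet_C_of_eventually_dvd [IsDomain R] [Infinite R] {g : R[X]}
    {c : R} (h : ∀ᶠ k in cofinite, g.eval k ∣ c) : primeSet g ⊆ primeSet (C c) := by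
  rintro 𝔭 ⟨h𝔭, hbot, k, hk⟩
  refine mem_primeSet_C.mpr ⟨h𝔭, hbot, ?_⟩
  have hexc : {x | ¬ g.eval (k + x) ∣ c}.Finite :=
    (eventually_cofinite.mp h).preimage (add_right_injective k).injOn
  obtain ⟨x, hx𝔭, hx⟩ := ((Ideal.infinite_coe_of_ne_bot hbot).sdiff hexc).nonempty
  have hshift : g.eval (k + x) - g.eval k ∈ 𝔭 :=
    𝔭.mem_of_dvd (sub_dvd_eval_sub (k + x) k g) (by simpa using hx𝔭)
  exact 𝔭.mem_of_dvd (not_not.mp hx) (by simpa using 𝔭.add_mem hshift hk)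

theorem exists_primeSet_subset_primeSet_C [IsDomain R] {f : R[X]} {c : R} (hc : c ≠ 0)
    (hfin : (primeSet f \ primeSet (C c)).Finite) :
    ∃ b : R, b ≠ 0 ∧ primeSet f ⊆ primeSet (C b) := by
  classical
  obtain ⟨b, hbI, hb⟩ := Submodule.exists_mem_ne_zero_of_ne_bot
    (p := Ideal.span {c} * ∏ 𝔭 ∈ hfin.toFinset, 𝔭) <| mul_ne_zero (by simpa using hc)
      (Finset.prod_ne_zero_iff.mpr fun 𝔭 h𝔭 => (hfin.mem_toFinset.mp h𝔭).1.2.1)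
  refine ⟨b, hb, fun 𝔭 h𝔭 => mem_primeSet_C.mpr ⟨h𝔭.1, h𝔭.2.1, ?_⟩⟩
  by_cases hc𝔭 : 𝔭 ∈ primeSet (C c)
  · have hc𝔭' : Ideal.span {c} ≤ 𝔭 :=
      (Ideal.span_singleton_le_iff_mem _).mpr (mem_primeSet_C.mp hc𝔭).2.2
    exact hc𝔭' (Ideal.mul_le_left hbI)
  · have h𝔭T : 𝔭 ∈ hfin.toFinset := hfin.mem_toFinset.mpr ⟨h𝔭, hc𝔭⟩
    exact Ideal.le_of_dvd (Finset.dvd_prod_of_mem _ h𝔭T) (Ideal.mul_le_right hbI)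

theorem exists_mul_add_mul_eq_C_of_isCoprime_map {S : Type*} [CommRing S] [IsDomain S]
    {φ : R →+* S} (hφ : Function.Injective φ) {f g : R[X]} (hf : f.natDegree ≠ 0)
    (h : IsCoprime (f.map φ) (g.map φ)) : ∃ (p q : R[X]) (e : R), e ≠ 0 ∧ f * p + g * q = C e := by
  obtain ⟨p, q, -, -, hpq⟩ := exists_mul_add_mul_eq_C_resultant f g le_rfl le_rfl (Or.inl hf)
  refine ⟨p, q, _, fun he => resultant_ne_zero _ _ h ?_, hpq⟩
  simp [natDegree_map_eq_of_injective hφ, resultant_map_map, he]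

theorem eval_dvd_of_mul_eq_mul [IsDomain R] {f g α Γ U V : R[X]} {e k : R}
    (hfΓ : f * Γ = α * g) (hUV : Γ * U + α * V = C e) (hgk : g.eval k ≠ 0)
    (hk : g.eval k ∣ f.eval k) : Γ.eval k ∣ e := by
  obtain ⟨t, ht⟩ := hk
  have hα : α.eval k = t * Γ.eval k := by
    refine mul_right_cancel₀ hgk ?_
    have := congrArg (eval k) hfΓ
    simp only [eval_mul, ht] at this
    linear_combination -this
  have he := congrArg (eval k) hUV
  simp only [eval_add, eval_mul, eval_C, hα] at he
  exact ⟨U.eval k + t * V.eval k, by rw [← he]; ring⟩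

section FractionRing

variable [IsDomain R] {K : Type*} [Field K] [Algebra R K] [IsFractionRing R K]

theorem exists_map_eq_C_mul (p : K[X]) :
    ∃ d : R, d ≠ 0 ∧ ∃ P : R[X], P.map (algebraMap R K) = C (algebraMap R K d) * p := by
  obtain ⟨b, hb, hP⟩ := IsLocalization.integerNormalization_spec (nonZeroDivisors R) p
  refine ⟨b, nonZeroDivisors.ne_zero hb, _, hP.trans ?_⟩
  rw [Algebra.smul_def, Polynomial.algebraMap_apply]

variable (K) in
theorem exists_isCoprime_map_of_mul_eq_mul (f : R[X]) {g : R[X]} (hg : g ≠ 0) :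
    ∃ α Γ : R[X], Γ ≠ 0 ∧ f * Γ = α * g ∧
      IsCoprime (α.map (algebraMap R K)) (Γ.map (algebraMap R K)) := by
  classical
  set φ := algebraMap R K with hφdef
  have hinj : Function.Injective φ := IsFractionRing.injective R K
  have hg' : g.map φ ≠ 0 := (Polynomial.map_ne_zero_iff hinj).mpr hg
  set d := gcd (f.map φ) (g.map φ)
  have hd : d ≠ 0 := gcd_ne_zero_of_right hg'
  have hfd : d * (f.map φ / d) = f.map φ := EuclideanDomain.mul_div_cancel' hd (gcd_dvd_left _ _)
  have hgd : d * (g.map φ / d) = g.map φ := EuclideanDomain.mul_div_cancel' hd (gcd_dvd_right _ _)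
  obtain ⟨a, ha, A, hA⟩ := exists_map_eq_C_mul (R := R) (f.map φ / d)
  obtain ⟨b, hb, B, hB⟩ := exists_map_eq_C_mul (R := R) (g.map φ / d)
  rw [← hφdef] at hA hB
  have hφ : ∀ {r : R}, r ≠ 0 → IsUnit (C (φ r)) := fun hr =>
    isUnit_C.mpr (isUnit_iff_ne_zero.mpr ((map_ne_zero_iff φ hinj).mpr hr))
  refine ⟨C b * A, C a * B, ?_, ?_, ?_⟩
  · refine mul_ne_zero (C_ne_zero.mpr ha) fun hB0 => ?_
    rw [hB0, Polynomial.map_zero, eq_comm, mul_eq_zero, C_eq_zero] at hB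
    exact hB.elim ((map_ne_zero_iff φ hinj).mpr hb) (right_div_gcd_ne_zero hg')
  · apply Polynomial.map_injective φ hinj
    simp only [Polynomial.map_mul, map_C, hA, hB]
    linear_combination (C (φ a) * C (φ b)) * ((f.map φ / d) * hgd - (g.map φ / d) * hfd)
  · simp only [Polynomial.map_mul, map_C, hA, hB, ← mul_assoc]
    exact (isCoprime_mul_units_left ((hφ hb).mul (hφ ha)) ((hφ ha).mul (hφ hb)) _ _).mpr
      (isCoprime_div_gcd_div_gcd hg')

end FractionRing

def NoBoundedValues (R : Type*) [CommRing R] : Prop :=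
  ∀ (g : R[X]) (c : R), c ≠ 0 → (∀ᶠ k in cofinite, g.eval k ∣ c) → g.natDegree = 0

theorem NoBoundedValues.infinite [Nontrivial R] (h : NoBoundedValues R) : Infinite R := by
  by_contra hfin
  have : Finite R := not_infinite_iff_finite.mp hfin
  simpa using h X 1 one_ne_zero (by simp [cofinite_eq_bot])

theorem IsDRing.noBoundedValues [IsDomain R] (hD : IsDRing R) : NoBoundedValues R := by
  intro g c hc hgc
  have hinj := IsFractionRing.injective R (FractionRing R)
  obtain ⟨q, hq⟩ := hD (C c) g (by simpa using hgc)
  have hc' : (C c).map (algebraMap R (FractionRing R)) ≠ 0 :=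
    (Polynomial.map_ne_zero_iff hinj).mpr (C_ne_zero.mpr hc)
  have hdeg := congrArg natDegree hq
  rw [map_C, natDegree_C, natDegree_mul (left_ne_zero_of_mul (hq ▸ hc'))
    (right_ne_zero_of_mul (hq ▸ hc')), natDegree_map_eq_of_injective hinj] at hdeg
  omega

theorem NoBoundedValues.isDRing [IsDomain R] (h : NoBoundedValues R) : IsDRing R := by
  have := h.infinite
  intro f g hfg
  set φ := algebraMap R (FractionRing R)
  have hinj : Function.Injective φ := IsFractionRing.injective R _
  rcases eq_or_ne g 0 with rfl | hg
  · have hf : f = 0 := eq_zero_of_infinite_isRoot f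
      (frequently_cofinite_iff_infinite.mp (by simpa using hfg.frequently))
    exact ⟨0, by simp [hf]⟩
  obtain ⟨α, Γ, hΓ, hfΓ, hcop⟩ := exists_isCoprime_map_of_mul_eq_mul (FractionRing R) f hg
  have hΓconst : Γ.natDegree = 0 := by
    by_contra hΓdeg
    obtain ⟨U, V, e, he, hUV⟩ := exists_mul_add_mul_eq_C_of_isCoprime_map hinj hΓdeg hcop.symm
    refine hΓdeg (h Γ e he ?_)
    filter_upwards [hfg, eventually_cofinite_eval_ne_zero hg] with k hk hgk
    exact eval_dvd_of_mul_eq_mul hfΓ hUV hgk hk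
  obtain ⟨γ, rfl⟩ := natDegree_eq_zero.mp hΓconst
  have hγ : φ γ ≠ 0 := (map_ne_zero_iff φ hinj).mpr (C_ne_zero.mp hΓ)
  refine ⟨C (φ γ)⁻¹ * α.map φ, ?_⟩
  have hmap := congrArg (Polynomial.map φ) hfΓ
  simp only [Polynomial.map_mul, map_C] at hmap
  rw [mul_assoc, ← hmap, mul_left_comm, ← C_mul, inv_mul_cancel₀ hγ, C_1, mul_one]

theorem NoBoundedValues.not_primeSet_subset_primeSet_C [IsDomain R] (h : NoBoundedValues R)
    {f : R[X]} (hf : 1 ≤ f.degree) {b : R} (hb : b ≠ 0) : ¬ primeSet f ⊆ primeSet (C b) := by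
  intro hsub
  have := h.infinite
  have hfdeg : 0 < f.natDegree :=
    natDegree_pos_iff_degree_pos.mpr (Nat.WithBot.one_le_iff_zero_lt.mp hf)
  have hf0 : f ≠ 0 := ne_zero_of_natDegree_gt hfdeg
  obtain ⟨τ, hτ⟩ := (eventually_cofinite_eval_ne_zero hf0).exists
  set a := f.eval τ
  set F := f.comp (C (a * b) * X + C τ)
  have hFdeg : F.natDegree = f.natDegree := by
    rw [natDegree_comp, natDegree_linear (mul_ne_zero hτ hb), mul_one]
  have hFdvd : ∀ t, F.eval t ≠ 0 → F.eval t ∣ a := by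
    intro t ht
    obtain ⟨e, he⟩ := sub_dvd_eval_sub (a * b * t + τ) τ f
    have hFt : F.eval t = f.eval (a * b * t + τ) := by simp [F, eval_comp]
    have hval : F.eval t = a * (1 + b * (t * e)) := by rw [hFt]; linear_combination he
    rw [hval] at ht ⊢
    refine (IsUnit.mul_right_dvd (isUnit_of_dvd_sub_one ⟨t * e, by ring⟩ fun 𝔪 h𝔪 hu => ?_)).mpr
      dvd_rfl
    have hbot : 𝔪 ≠ ⊥ := fun h0 => right_ne_zero_of_mul ht (by simpa [h0] using hu)
    have hf𝔪 : f.eval (a * b * t + τ) ∈ 𝔪 := by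
      rw [← hFt, hval]
      exact 𝔪.mul_mem_left a hu
    exact (mem_primeSet_C.mp (hsub ⟨h𝔪.isPrime, hbot, _, hf𝔪⟩)).2.2
  have hF0 : F ≠ 0 := ne_zero_of_natDegree_gt (hFdeg ▸ hfdeg)
  have hFconst := h F a hτ (by
    filter_upwards [eventually_cofinite_eval_ne_zero hF0] with t ht using hFdvd t ht)
  omega

theorem NoBoundedValues.primeSet_diff_infinite [IsDomain R] (h : NoBoundedValues R) {f : R[X]}
    (hf : 1 ≤ f.degree) {c : R} (hc : c ≠ 0) : (primeSet f \ primeSet (C c)).Infinite := fun hfin =>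
  let ⟨_, hb, hsub⟩ := exists_primeSet_subset_primeSet_C hc hfin
  h.not_primeSet_subset_primeSet_C hf hb hsub

theorem noBoundedValues_of_primeSet_diff_infinite [IsDomain R]
    (h : ∀ f : R[X], 1 ≤ f.degree → ∀ c : R, c ≠ 0 → (primeSet f \ primeSet (C c)).Infinite) :
    NoBoundedValues R := by
  have : Infinite R := by
    by_contra hfin
    have : Finite R := not_infinite_iff_finite.mp hfin
    have : Finite (Ideal R) := Finite.of_injective _ SetLike.coe_injective
    exact h X (by simp) 1 one_ne_zero (Set.toFinite _)
  intro g c hc hgc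
  by_contra hg
  have hg1 : 1 ≤ g.degree := Nat.WithBot.one_le_iff_zero_lt.mpr
    (natDegree_pos_iff_degree_pos.mp (Nat.pos_of_ne_zero hg))
  simpa [Set.sdiff_eq_empty.mpr (primeSet_subset_primeSet_C_of_eventually_dvd hgc)] using
    h g hg1 c hc

theorem isDRing_iff_noBoundedValues [IsDomain R] : IsDRing R ↔ NoBoundedValues R :=
  ⟨IsDRing.noBoundedValues, NoBoundedValues.isDRing⟩

end

theorem isDRing_iff_primeSet_diff_infinite (R : Type*) [CommRing R] [IsDomain R] :
    IsDRing R ↔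
      ∀ f : Polynomial R, 1 ≤ f.degree → ∀ c : R, c ≠ 0 →
        (primeSet f \ primeSet (Polynomial.C c)).Infinite :=
  isDRing_iff_noBoundedValues.trans
    ⟨fun h _ hf _ hc => h.primeSet_diff_infinite hf hc, noBoundedValues_of_primeSet_diff_infinite⟩
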